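/- arXiv:2403.19719 — 2 statements merged into one kernel-verified Lean document; each statement's English description precedes it below -/
import Mathlib

section
/- Let μ be a probability measure on ℝ with Höffding measure λ_μ and let X have law μ. Then λ_μ is a finite measure if and only if X has a finite second moment, and in that case the total mass equals the variance: λ_μ(ℝ × ℝ) = ∫∫ H_μ(x,y) dx dy = Var(X). -/
open MeasureTheory ProbabilityTheory Filter Set
open scoped ENNReal NNReal

noncomputable section

/-- The distribution function of `μ`: `F x = μ (-∞, x]`. -/
def distF (μ : MeasureTheory.Measure ℝ) (x : ℝ) : ℝ := (μ (Set.Iic x)).toReal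

/-- The Höffding kernel of `μ`: `H (x, y) = F (min x y) * (1 - F (max x y))`. -/
def hoeffdingKernel (μ : MeasureTheory.Measure ℝ) (x y : ℝ) : ℝ :=
  distF μ (min x y) * (1 - distF μ (max x y))

/-- The Höffding measure of `μ`: the measure on `ℝ × ℝ` with density `H_μ`
with respect to two-dimensional Lebesgue measure. -/
def hoeffdingMeasure (μ : MeasureTheory.Measure ℝ) : MeasureTheory.Measure (ℝ × ℝ) :=
  (MeasureTheory.volume : MeasureTheory.Measure (ℝ × ℝ)).withDensity
    fun p => ENNReal.ofReal (hoeffdingKernel μ p.1 p.2)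

/-- The covariance of `u` and `v` under `μ`. -/
def covFn (μ : MeasureTheory.Measure ℝ) (u v : ℝ → ℝ) : ℝ :=
  (∫ x, u x * v x ∂μ) - (∫ x, u x ∂μ) * (∫ x, v x ∂μ)

/-! Write `I(a, b) = [min a b, max a b)`. Both `x` and `y` lie in `I(a, b)` exactly when one of
`a, b` is `≤ min x y` and the other is `> max x y`, so `(μ ⊗ μ){(a, b) | x, y ∈ I(a, b)}` is
`2 H_μ(x, y)`. Integrating in `(x, y)` and exchanging the order of integration (Tonelli) gives
`2 λ_μ(ℝ²) = ∫∫ |I(a, b)|² dμ(a) dμ(b) = ∫∫ (a - b)² dμ(a) dμ(b)`, which is `2 Var(X)` when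
`X ∈ L²`. Otherwise it is infinite: were it finite, `b ↦ a - b` would be square integrable for
some `a`, and then so would be `b ↦ b`. -/

section Variance

variable {Ω : Type*} [MeasurableSpace Ω] {μ : Measure Ω} [IsProbabilityMeasure μ] {X : Ω → ℝ}

lemma memLp_two_of_memLp_two_sub_prod (hX : AEStronglyMeasurable X μ)
    (h : MemLp (fun p : Ω × Ω => X p.1 - X p.2) 2 (μ.prod μ)) : MemLp X 2 μ := by
  have hsq := (memLp_two_iff_integrable_sq h.1).1 h
  obtain ⟨ω, hω⟩ := hsq.prod_right_ae.exists
  have hslice : MemLp (fun ω' => X ω - X ω') 2 μ :=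
    (memLp_two_iff_integrable_sq (aestronglyMeasurable_const.sub hX)).2 hω
  convert (memLp_const (X ω)).sub hslice using 1
  ext ω'
  simp

lemma lintegral_ofReal_sq_sub_prod (hX : AEStronglyMeasurable X μ) :
    ∫⁻ p, ENNReal.ofReal ((X p.1 - X p.2) ^ 2) ∂(μ.prod μ) = 2 * evariance X μ := by
  have hD : AEStronglyMeasurable (fun p : Ω × Ω => X p.1 - X p.2) (μ.prod μ) :=
    hX.comp_fst.sub hX.comp_snd
  by_cases hX2 : MemLp X 2 μ
  · have hD2 : MemLp (fun p : Ω × Ω => X p.1 - X p.2) 2 (μ.prod μ) :=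
      (hX2.comp_fst μ).sub (hX2.comp_snd μ)
    have hmean : ∫ p, (X p.1 - X p.2) ∂(μ.prod μ) = 0 := by
      have hX1 := hX2.integrable one_le_two
      rw [integral_sub (hX1.comp_fst μ) (hX1.comp_snd μ), integral_fun_fst X, integral_fun_snd X,
        sub_self]
    have hvar : Var[fun p : Ω × Ω => X p.1 - X p.2; μ.prod μ] = 2 * Var[X; μ] := by
      have hsum := variance_add_prod hX2 hX2.neg (μ := μ) (ν := μ)
      simp only [Pi.neg_apply, ← sub_eq_add_neg, variance_neg] at hsum
      rw [hsum, two_mul]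
    rw [← ofReal_integral_eq_lintegral_ofReal ((memLp_two_iff_integrable_sq hD).1 hD2)
      (.of_forall fun _ => sq_nonneg _), ← variance_of_integral_eq_zero hD.aemeasurable hmean,
      hvar, ENNReal.ofReal_mul zero_le_two, ofReal_variance hX2, ENNReal.ofReal_ofNat]
  · rw [evariance_eq_top hX hX2, ENNReal.mul_top two_ne_zero, ← not_lt_top_iff]
    intro hfin
    refine hX2 (memLp_two_of_memLp_two_sub_prod hX ((memLp_two_iff_integrable_sq hD).2 ?_))
    exact (lintegral_ofReal_ne_top_iff_integrable (hD.pow 2)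
      (.of_forall fun _ => sq_nonneg _)).1 hfin.ne

end Variance

lemma hoeffdingMeasure_univ (μ : Measure ℝ) :
    hoeffdingMeasure μ univ = ∫⁻ p : ℝ × ℝ, ENNReal.ofReal (hoeffdingKernel μ p.1 p.2) := by
  rw [hoeffdingMeasure, withDensity_apply _ .univ, Measure.restrict_univ]

section Hoeffding

variable (μ : Measure ℝ) [IsProbabilityMeasure μ]

lemma distF_eq_cdf : distF μ = cdf μ := by
  ext x
  rw [cdf_eq_real, measureReal_def, distF]

lemma hoeffdingKernel_nonneg (x y : ℝ) : 0 ≤ hoeffdingKernel μ x y := by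
  rw [hoeffdingKernel, distF_eq_cdf]
  exact mul_nonneg (cdf_nonneg μ _) (sub_nonneg.2 (cdf_le_one μ _))

lemma measurable_hoeffdingKernel : Measurable fun p : ℝ × ℝ => hoeffdingKernel μ p.1 p.2 := by
  simp only [hoeffdingKernel, distF_eq_cdf]
  have := (monotone_cdf μ).measurable
  fun_prop

lemma ofReal_hoeffdingKernel (x y : ℝ) :
    ENNReal.ofReal (hoeffdingKernel μ x y) = μ (Iic (min x y)) * μ (Ioi (max x y)) := by
  rw [hoeffdingKernel, distF_eq_cdf, ENNReal.ofReal_mul (cdf_nonneg μ _),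
    ENNReal.ofReal_sub _ (cdf_nonneg μ _), ofReal_cdf, ofReal_cdf, ENNReal.ofReal_one, ← compl_Iic,
    prob_compl_eq_one_sub measurableSet_Iic]

lemma setOf_both_mem_Ico_min_max (x y : ℝ) :
    {q : ℝ × ℝ | x ∈ Ico (min q.1 q.2) (max q.1 q.2) ∧ y ∈ Ico (min q.1 q.2) (max q.1 q.2)}
      = Iic (min x y) ×ˢ Ioi (max x y) ∪ Ioi (max x y) ×ˢ Iic (min x y) := by
  ext ⟨a, b⟩
  simp only [mem_ofPred_eq, mem_union, mem_prod, mem_Ico, mem_Iic, mem_Ioi, min_le_iff,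
    le_min_iff, lt_max_iff, max_lt_iff]
  grind

lemma measure_setOf_both_mem_Ico_min_max (x y : ℝ) :
    (μ.prod μ)
        {q : ℝ × ℝ | x ∈ Ico (min q.1 q.2) (max q.1 q.2) ∧ y ∈ Ico (min q.1 q.2) (max q.1 q.2)}
      = 2 * ENNReal.ofReal (hoeffdingKernel μ x y) := by
  have hdisj : Disjoint (Iic (min x y) ×ˢ Ioi (max x y)) (Ioi (max x y) ×ˢ Iic (min x y)) :=
    disjoint_prod.2 (.inl (Iic_disjoint_Ioi min_le_max))
  rw [setOf_both_mem_Ico_min_max, measure_union hdisj (measurableSet_Ioi.prod measurableSet_Iic),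
    Measure.prod_prod, Measure.prod_prod, ofReal_hoeffdingKernel, mul_comm (μ (Ioi _)), two_mul]

lemma volume_Ico_min_max_prod_self (q : ℝ × ℝ) :
    volume (Ico (min q.1 q.2) (max q.1 q.2) ×ˢ Ico (min q.1 q.2) (max q.1 q.2))
      = ENNReal.ofReal ((q.1 - q.2) ^ 2) := by
  rw [Measure.volume_eq_prod, Measure.prod_prod, Real.volume_Ico, max_sub_min_eq_abs',
    ← ENNReal.ofReal_mul (abs_nonneg _), abs_mul_abs_self, sq]

lemma toReal_hoeffdingMeasure_univ :
    (hoeffdingMeasure μ univ).toReal = ∫ p : ℝ × ℝ, hoeffdingKernel μ p.1 p.2 := by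
  rw [hoeffdingMeasure_univ]
  exact (integral_eq_lintegral_of_nonneg_ae (f := fun p : ℝ × ℝ => hoeffdingKernel μ p.1 p.2)
    (.of_forall fun p => hoeffdingKernel_nonneg μ p.1 p.2)
    (measurable_hoeffdingKernel μ).aestronglyMeasurable).symm

lemma two_mul_hoeffdingMeasure_univ :
    2 * hoeffdingMeasure μ univ = ∫⁻ q : ℝ × ℝ, ENNReal.ofReal ((q.1 - q.2) ^ 2) ∂(μ.prod μ) := by
  set E : Set ((ℝ × ℝ) × (ℝ × ℝ)) := {r | r.1.1 ∈ Ico (min r.2.1 r.2.2) (max r.2.1 r.2.2) ∧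
    r.1.2 ∈ Ico (min r.2.1 r.2.2) (max r.2.1 r.2.2)}
  have hE : MeasurableSet E := by
    simp only [E, mem_Ico, ofPred_and]
    refine .inter (.inter ?_ ?_) (.inter ?_ ?_) <;> first
      | exact measurableSet_le (by fun_prop) (by fun_prop)
      | exact measurableSet_lt (by fun_prop) (by fun_prop)
  calc 2 * hoeffdingMeasure μ univ
      = ∫⁻ p : ℝ × ℝ, (μ.prod μ) (Prod.mk p ⁻¹' E) := by
        rw [hoeffdingMeasure_univ, ← lintegral_const_mul' _ _ ENNReal.ofNat_ne_top]
        exact lintegral_congr fun p => (measure_setOf_both_mem_Ico_min_max μ p.1 p.2).symm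
    _ = (volume.prod (μ.prod μ)) E := (Measure.prod_apply hE).symm
    _ = ∫⁻ q, volume ((fun p => (p, q)) ⁻¹' E) ∂(μ.prod μ) := Measure.prod_apply_symm hE
    _ = ∫⁻ q : ℝ × ℝ, ENNReal.ofReal ((q.1 - q.2) ^ 2) ∂(μ.prod μ) :=
        lintegral_congr volume_Ico_min_max_prod_self

lemma hoeffdingMeasure_univ_eq_evariance : hoeffdingMeasure μ univ = evariance id μ := by
  have h : 2 * hoeffdingMeasure μ univ = 2 * evariance id μ :=
    (two_mul_hoeffdingMeasure_univ μ).trans (lintegral_ofReal_sq_sub_prod aestronglyMeasurable_id)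
  exact (ENNReal.mul_right_inj two_ne_zero ENNReal.ofNat_ne_top).1 h

end Hoeffding

theorem hoeffdingMeasure_finite_iff_and_total_mass_general
    {Ω : Type*} [MeasurableSpace Ω] (P : Measure Ω)
    (X : Ω → ℝ) (hX : Measurable X)
    (μ : Measure ℝ) [IsProbabilityMeasure μ] (hlaw : P.map X = μ) :
    (IsFiniteMeasure (hoeffdingMeasure μ) ↔ MemLp X 2 P) ∧
    (MemLp X 2 P →
      (hoeffdingMeasure μ Set.univ).toReal
          = (∫ p : ℝ × ℝ, hoeffdingKernel μ p.1 p.2) ∧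
      (hoeffdingMeasure μ Set.univ).toReal = variance X P) := by
  have hmass := hoeffdingMeasure_univ_eq_evariance μ
  have hmem : MemLp X 2 P ↔ MemLp id 2 μ := by
    rw [← hlaw, memLp_map_measure_iff aestronglyMeasurable_id hX.aemeasurable]
    rfl
  refine ⟨?_, fun _ => ⟨toReal_hoeffdingMeasure_univ μ, ?_⟩⟩
  · rw [isFiniteMeasure_iff, hmass, evariance_lt_top_iff_memLp aestronglyMeasurable_id, hmem]
  · rw [hmass, ← variance, ← hlaw, variance_id_map hX.aemeasurable]

/-- The Höffding measure `λ_μ` is finite if and only if `X` (with law `μ`) has a finite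
second moment, and in this case its total mass equals
`∫∫ H_μ(x,y) dx dy = Var(X)`. -/
theorem hoeffdingMeasure_finite_iff_and_total_mass
    {Ω : Type*} [MeasurableSpace Ω] (P : Measure Ω) [IsProbabilityMeasure P]
    (X : Ω → ℝ) (hX : Measurable X)
    (μ : Measure ℝ) [IsProbabilityMeasure μ] (hlaw : P.map X = μ) :
    (IsFiniteMeasure (hoeffdingMeasure μ) ↔ MemLp X 2 P) ∧
    (MemLp X 2 P →
      (hoeffdingMeasure μ Set.univ).toReal
          = (∫ p : ℝ × ℝ, hoeffdingKernel μ p.1 p.2) ∧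
      (hoeffdingMeasure μ Set.univ).toReal = variance X P) :=
  hoeffdingMeasure_finite_iff_and_total_mass_general P X hX μ hlaw
end
end

section
/- Let μ be a probability measure on ℝ with Höffding measure λ_μ. For all Borel sets A, B ⊂ ℝ, λ_μ(A × B)² ≤ λ_μ(A × A) · λ_μ(B × B). -/
open MeasureTheory ProbabilityTheory Filter Set
open scoped ENNReal NNReal

noncomputable section

/-!
Writing `J_A(s, t)` for the Lebesgue measure of `A ∩ [s, t)`, the Höffding kernel is
`H_μ(x, y) = (μ ⊗ μ){(s, t) : s ≤ min x y, max x y < t}`, so Tonelli's theorem gives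
`λ_μ(A × B) = ∫ J_A J_B d(μ ⊗ μ)`. Thus `λ_μ` restricted to rectangles is a Gram form in
`L²(μ ⊗ μ)`, and the inequality is Cauchy–Schwarz.
-/

theorem ENNReal.lintegral_mul_sq_le {α : Type*} [MeasurableSpace α] (ν : Measure α)
    {f g : α → ℝ≥0∞} (hf : AEMeasurable f ν) (hg : AEMeasurable g ν) :
    (∫⁻ a, f a * g a ∂ν) ^ 2 ≤ (∫⁻ a, f a * f a ∂ν) * ∫⁻ a, g a * g a ∂ν := by
  have holder := lintegral_mul_le_Lp_mul_Lq ν Real.HolderConjugate.two_two hf hg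
  simp only [Pi.mul_apply, ENNReal.rpow_two, sq] at holder
  calc (∫⁻ a, f a * g a ∂ν) ^ 2
      ≤ ((∫⁻ a, f a * f a ∂ν) ^ (1 / 2 : ℝ) * (∫⁻ a, g a * g a ∂ν) ^ (1 / 2 : ℝ)) ^ 2 :=
        pow_le_pow_left₀ zero_le holder 2
    _ = (∫⁻ a, f a * f a ∂ν) * ∫⁻ a, g a * g a ∂ν := by
        simp only [mul_pow, ← ENNReal.rpow_two, one_div,
          ENNReal.rpow_inv_rpow (two_ne_zero (α := ℝ))]

theorem measurable_measure_inter_Ico {ν : Measure ℝ} [SFinite ν] {A : Set ℝ}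
    (hA : MeasurableSet A) : Measurable fun q : ℝ × ℝ => ν (A ∩ Ico q.1 q.2) :=
  measurable_measure_prodMk_left (s := {z : (ℝ × ℝ) × ℝ | z.2 ∈ A ∩ Ico z.1.1 z.1.2}) <|
    (measurable_snd hA).inter <|
      (measurableSet_le (measurable_fst.comp measurable_fst) measurable_snd).inter
        (measurableSet_lt measurable_snd (measurable_snd.comp measurable_fst))

theorem setOf_mem_Ico_and_mem_Ico (x y : ℝ) :
    {q : ℝ × ℝ | x ∈ Ico q.1 q.2 ∧ y ∈ Ico q.1 q.2} = Iic (min x y) ×ˢ Ioi (max x y) := by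
  ext q
  simp only [mem_ofPred_eq, mem_Ico, mem_prod, mem_Iic, mem_Ioi, le_min_iff, max_lt_iff]
  tauto

theorem ofReal_hoeffdingKernel_s7 (μ : Measure ℝ) [IsProbabilityMeasure μ] (x y : ℝ) :
    ENNReal.ofReal (hoeffdingKernel μ x y)
      = μ.prod μ {q : ℝ × ℝ | x ∈ Ico q.1 q.2 ∧ y ∈ Ico q.1 q.2} := by
  have survival : 1 - distF μ (max x y) = (μ (Ioi (max x y))).toReal := by
    rw [distF, ← compl_Iic, ← measureReal_def, ← measureReal_def,
      probReal_compl_eq_one_sub measurableSet_Iic]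
  rw [setOf_mem_Ico_and_mem_Ico, Measure.prod_prod, hoeffdingKernel, survival, distF,
    ← ENNReal.toReal_mul, ENNReal.ofReal_toReal (by finiteness)]

theorem hoeffdingMeasure_prod_eq_lintegral (μ : Measure ℝ) [IsProbabilityMeasure μ]
    {A B : Set ℝ} (hA : MeasurableSet A) (hB : MeasurableSet B) :
    hoeffdingMeasure μ (A ×ˢ B)
      = ∫⁻ q, volume (A ∩ Ico q.1 q.2) * volume (B ∩ Ico q.1 q.2) ∂μ.prod μ := by
  set E : Set ((ℝ × ℝ) × (ℝ × ℝ)) :=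
    {z | z.1 ∈ A ×ˢ B ∧ z.1.1 ∈ Ico z.2.1 z.2.2 ∧ z.1.2 ∈ Ico z.2.1 z.2.2}
  have hE : MeasurableSet E := by
    simp only [E, mem_prod, mem_Ico, ofPred_and]
    measurability
  calc hoeffdingMeasure μ (A ×ˢ B)
      = ∫⁻ p, μ.prod μ (Prod.mk p ⁻¹' E) := by
        rw [hoeffdingMeasure, withDensity_apply _ (hA.prod hB), ← lintegral_indicator (hA.prod hB)]
        refine lintegral_congr fun p => ?_
        by_cases hp : p ∈ A ×ˢ B
        · rw [indicator_of_mem hp, ofReal_hoeffdingKernel_s7]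
          congr 1
          ext q
          exact (and_iff_right hp).symm
        · rw [indicator_of_notMem hp, eq_comm, measure_eq_zero_iff_ae_notMem]
          exact ae_of_all _ fun q hq => hp hq.1
    _ = ∫⁻ q, volume ((fun p => (p, q)) ⁻¹' E) ∂μ.prod μ := by
        rw [← Measure.prod_apply hE, Measure.prod_apply_symm hE]
    _ = ∫⁻ q, volume (A ∩ Ico q.1 q.2) * volume (B ∩ Ico q.1 q.2) ∂μ.prod μ := by
        refine lintegral_congr fun q => ?_
        rw [Measure.volume_eq_prod, ← Measure.prod_prod]
        congr 1
        ext p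
        simp only [E, mem_preimage, mem_ofPred_eq, mem_prod, mem_inter_iff]
        tauto

/-- For a probability measure `μ` on `ℝ` with Höffding measure `λ_μ` and all Borel sets
`A, B ⊆ ℝ`, `λ_μ(A × B)² ≤ λ_μ(A × A) * λ_μ(B × B)`. -/
theorem hoeffdingMeasure_prod_sq_le (μ : Measure ℝ) [IsProbabilityMeasure μ]
    (A B : Set ℝ) (hA : MeasurableSet A) (hB : MeasurableSet B) :
    (hoeffdingMeasure μ (A ×ˢ B)) ^ 2
      ≤ hoeffdingMeasure μ (A ×ˢ A) * hoeffdingMeasure μ (B ×ˢ B) := by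
  rw [hoeffdingMeasure_prod_eq_lintegral μ hA hB, hoeffdingMeasure_prod_eq_lintegral μ hA hA,
    hoeffdingMeasure_prod_eq_lintegral μ hB hB]
  exact ENNReal.lintegral_mul_sq_le _ (measurable_measure_inter_Ico hA).aemeasurable
    (measurable_measure_inter_Ico hB).aemeasurable
end
end
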